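/- arXiv:1707.03482 — 2 statements merged into one kernel-verified Lean document; each statement's English description precedes it below -/
import Mathlib

section
/- Let d ≥ 2 and E ∈ (-2d, 2d). Then there exist θ₁, ..., θ_d ∈ [0,1) such that ∑_{i=1}^d 2·cos(2πθᵢ) = E, ∑_{i=1}^d sin(2πθᵢ) = 0, and ∑_{i=1}^d sin²(2πθᵢ) ≠ 0. -/
open Real

lemma aux_sum (d k : ℕ) (hk : k + 2 ≤ d) (a b c e : ℝ) :
    ∑ n ∈ Finset.range d, (if n = 0 then a else if n = 1 then b else if n < k + 2 then c else e)
    = a + b + k * c + ((d - (k+2) : ℕ) : ℝ) * e := by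
  rw [Finset.range_eq_Ico,
    ← Finset.sum_Ico_consecutive _ (by omega : (0:ℕ) ≤ 2) (by omega : 2 ≤ d),
    ← Finset.sum_Ico_consecutive _ (by omega : (2:ℕ) ≤ k+2) hk]
  have h0 : Finset.Ico 0 2 = ({0, 1} : Finset ℕ) := by decide
  have h1 : ∑ n ∈ Finset.Ico 2 (k+2), (if n = 0 then a else if n = 1 then b else if n < k + 2 then c else e) = k * c := by
    have hc : ∀ n ∈ Finset.Ico 2 (k+2), (if n = 0 then a else if n = 1 then b else if n < k + 2 then c else e) = c := by
      intro n hn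
      simp only [Finset.mem_Ico] at hn
      rw [if_neg (by omega), if_neg (by omega), if_pos (by omega)]
    rw [Finset.sum_congr rfl hc, Finset.sum_const, Nat.card_Ico]
    simp [nsmul_eq_mul]
  have h2 : ∑ n ∈ Finset.Ico (k+2) d, (if n = 0 then a else if n = 1 then b else if n < k + 2 then c else e) = ((d - (k+2) : ℕ) : ℝ) * e := by
    have hc : ∀ n ∈ Finset.Ico (k+2) d, (if n = 0 then a else if n = 1 then b else if n < k + 2 then c else e) = e := by
      intro n hn
      simp only [Finset.mem_Ico] at hn
      rw [if_neg (by omega), if_neg (by omega), if_neg (by omega)]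
    rw [Finset.sum_congr rfl hc, Finset.sum_const, Nat.card_Ico]
    simp [nsmul_eq_mul]
  rw [h0, h1, h2]
  norm_num
  ring

theorem stmt0 (d : ℕ) (hd : 2 ≤ d) (E : ℝ) (h1 : -(2 * d) < E) (h2 : E < 2 * d) :
    ∃ θ : Fin d → ℝ, (∀ i, θ i ∈ Set.Ico (0 : ℝ) 1) ∧
      (∑ i, 2 * Real.cos (2 * π * θ i)) = E ∧
      (∑ i, Real.sin (2 * π * θ i)) = 0 ∧
      (∑ i, (Real.sin (2 * π * θ i))^2) ≠ 0 := by
  set m : ℕ := d - 2 with hm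
  have hdm : (d : ℝ) = (m : ℝ) + 2 := by
    have : d = m + 2 := by omega
    rw [this]; push_cast; ring
  set y : ℝ := (2 * m - E) / 4 with hy
  have hy1 : -1 < y := by rw [hy]; rw [hdm] at h2; linarith
  have hy2 : y < m + 1 := by rw [hy]; rw [hdm] at h1; linarith
  obtain ⟨k, hk⟩ : ∃ k : ℕ, (k : ℤ) = max ⌊y⌋ 0 :=
    ⟨(max ⌊y⌋ 0).toNat, Int.toNat_of_nonneg (le_max_right _ _)⟩
  have hk1 : y - 1 < (k : ℝ) := by
    have h6 : (⌊y⌋ : ℤ) ≤ (k : ℤ) := by rw [hk]; exact le_max_left _ _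
    have h3 : (⌊y⌋ : ℝ) ≤ (k : ℝ) := by exact_mod_cast h6
    linarith [Int.sub_one_lt_floor y]
  have hk2 : (k : ℝ) < y + 1 := by
    rcases le_or_gt 0 ⌊y⌋ with h | h
    · have h4 : (k : ℤ) = ⌊y⌋ := by rw [hk, max_eq_left h]
      have h5 : (k : ℝ) = (⌊y⌋ : ℝ) := by exact_mod_cast h4
      linarith [Int.floor_le y]
    · have h4 : (k : ℤ) = 0 := by rw [hk, max_eq_right h.le]
      have h5 : (k : ℝ) = 0 := by exact_mod_cast h4
      linarith
  have hkm : k + 2 ≤ d := by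
    rcases le_or_gt 0 ⌊y⌋ with h | h
    · have h4 : (k : ℤ) = ⌊y⌋ := by rw [hk, max_eq_left h]
      have h5 : (k : ℝ) = (⌊y⌋ : ℝ) := by exact_mod_cast h4
      have h7 : (k : ℝ) < (m : ℝ) + 1 := lt_of_le_of_lt (h5 ▸ Int.floor_le y) hy2
      have h8 : k < m + 1 := by exact_mod_cast h7
      omega
    · have h4 : (k : ℤ) = 0 := by rw [hk, max_eq_right h.le]
      have h9 : k = 0 := by exact_mod_cast h4
      omega
  set x : ℝ := (E - 2 * m + 4 * k) / 4 with hx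
  have hx1 : -1 < x := by rw [hx]; rw [hy] at hk1; linarith
  have hx2 : x < 1 := by rw [hx]; rw [hy] at hk2; linarith
  set t : ℝ := Real.arccos x / (2 * π) with ht
  have hπ : (0:ℝ) < π := Real.pi_pos
  have hta : 2 * π * t = Real.arccos x := by
    rw [ht]; field_simp
  have harc1 : 0 < Real.arccos x := Real.arccos_pos.mpr hx2
  have harc2 : Real.arccos x < π := lt_of_le_of_ne (Real.arccos_le_pi x) (fun h => absurd (Real.arccos_eq_pi.mp h) (by linarith))
  have ht1 : 0 < t := by rw [ht]; positivity
  have ht2 : t < 1/2 := by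
    rw [ht, div_lt_iff₀ (by positivity)]
    linarith
  have hcost : Real.cos (2 * π * t) = x := by
    rw [hta]; exact Real.cos_arccos (by linarith) (by linarith)
  have hsint : Real.sin (2 * π * t) = Real.sqrt (1 - x ^ 2) := by
    rw [hta]; exact Real.sin_arccos x
  have hsintpos : 0 < Real.sin (2 * π * t) := by
    rw [hsint]
    apply Real.sqrt_pos.mpr
    nlinarith
  -- the angles
  refine ⟨fun i => if (i : ℕ) = 0 then t else if (i : ℕ) = 1 then 1 - t else if (i : ℕ) < k + 2 then 1/2 else 0, ?_, ?_, ?_, ?_⟩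
  · intro i
    dsimp only
    split_ifs <;> constructor <;> norm_num <;> linarith
  · refine (Fin.sum_univ_eq_sum_range (fun n => 2 * Real.cos (2 * π * (if n = 0 then t else if n = 1 then 1 - t else if n < k + 2 then 1/2 else 0))) d).trans ?_
    have heq : ∀ n ∈ Finset.range d, 2 * Real.cos (2 * π * (if n = 0 then t else if n = 1 then 1 - t else if n < k + 2 then 1/2 else 0))
        = (if n = 0 then 2 * x else if n = 1 then 2 * x else if n < k + 2 then -2 else 2) := by
      intro n _
      split_ifs
      · rw [hcost]
      · rw [show 2 * π * (1 - t) = 2 * π - 2 * π * t by ring, Real.cos_sub]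
        simp [Real.cos_two_pi, Real.sin_two_pi, hcost]
      · norm_num [show 2 * π * (1/2 : ℝ) = π by ring, Real.cos_pi]
      · norm_num
    rw [Finset.sum_congr rfl heq, aux_sum d k hkm]
    have hcard : ((d - (k + 2) : ℕ) : ℝ) = (m : ℝ) - k := by
      have : d - (k + 2) = m - k := by omega
      rw [this]
      have hkm2 : k ≤ m := by omega
      push_cast [hkm2]
      ring
    rw [hcard, hx]
    ring
  · refine (Fin.sum_univ_eq_sum_range (fun n => Real.sin (2 * π * (if n = 0 then t else if n = 1 then 1 - t else if n < k + 2 then 1/2 else 0))) d).trans ?_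
    have heq : ∀ n ∈ Finset.range d, Real.sin (2 * π * (if n = 0 then t else if n = 1 then 1 - t else if n < k + 2 then 1/2 else 0))
        = (if n = 0 then Real.sin (2 * π * t) else if n = 1 then -Real.sin (2 * π * t) else if n < k + 2 then 0 else 0) := by
      intro n _
      split_ifs
      · rfl
      · rw [show 2 * π * (1 - t) = 2 * π - 2 * π * t by ring, Real.sin_sub]
        simp [Real.cos_two_pi, Real.sin_two_pi]
      · norm_num [show 2 * π * (1/2 : ℝ) = π by ring, Real.sin_pi]
      · norm_num
    rw [Finset.sum_congr rfl heq, aux_sum d k hkm]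
    ring
  · have hpos : 0 < ∑ n ∈ Finset.range d, (Real.sin (2 * π * (if n = 0 then t else if n = 1 then 1 - t else if n < k + 2 then 1/2 else 0))) ^ 2 := by
      apply Finset.sum_pos' (fun n _ => sq_nonneg _) ⟨0, Finset.mem_range.mpr (by omega), ?_⟩
      simp only [if_pos rfl]
      positivity
    exact ne_of_gt (hpos.trans_eq (Fin.sum_univ_eq_sum_range (fun n => (Real.sin (2 * π * (if n = 0 then t else if n = 1 then 1 - t else if n < k + 2 then 1/2 else 0))) ^ 2) d).symm)
end

section
/- Let d ≥ 1, q ∈ (ℕ₊)^d with all qᵢ even, and let V_q be the potential defined by V_q(n) = (1−δ²/d)δ if n ≡ 0 mod q and δ(−1)^{|n|} otherwise. There exists δ₀ > 0 such that for all 0 < δ < δ₀ and all unit vectors u ∈ ℓ²(ℤ^d): ‖(H₀ + V_q)u‖ > δ/2. In particular, 0 is not in the spectrum of H₀ + V_q. -/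
/-!
Write `V_q = δ ε + W` with `ε n = (-1)^|n|` and `W` supported on `qℤ^d`, where it equals
`-δ³/d` (`ε = 1` there because every `qᵢ` is even). Since `ε(n ± eᵢ) = -ε n`, the operator `H₀`
anticommutes with `ε`, so `⟨H₀u, εu⟩ = 0` and in
`‖(H₀ + V_q)u‖² ≥ ‖V_q u‖² + 2⟨H₀u, V_q u⟩` only `W` survives in the cross term:
`|⟨H₀u, Wu⟩| ≤ 2d · δ³/d`. Together with `|V_q| ≥ (1 - δ²)δ` this gives
`‖(H₀ + V_q)u‖² ≥ (1 - δ²)²δ² - 4δ³ > δ²/4` for small `δ`.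
-/

open Finset Function

section SquareSummable

variable {ι : Type*} {f g u : ι → ℝ}

theorem abs_mul_le_add_sq_div_two (a b : ℝ) : |a * b| ≤ (a ^ 2 + b ^ 2) / 2 := by
  rw [abs_mul]
  nlinarith [two_mul_le_add_sq |a| |b|, sq_abs a, sq_abs b]

theorem Summable.mul_of_summable_sq (hf : Summable fun i => f i ^ 2)
    (hg : Summable fun i => g i ^ 2) : Summable fun i => f i * g i :=
  .of_norm_bounded ((hf.add hg).div_const 2) fun i => abs_mul_le_add_sq_div_two (f i) (g i)

theorem Summable.sq_add (hf : Summable fun i => f i ^ 2) (hg : Summable fun i => g i ^ 2) :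
    Summable fun i => (f i + g i) ^ 2 := by
  simpa only [add_sq, mul_assoc] using (hf.add ((hf.mul_of_summable_sq hg).mul_left 2)).add hg

theorem tsum_sq_add (hf : Summable fun i => f i ^ 2) (hg : Summable fun i => g i ^ 2) :
    ∑' i, (f i + g i) ^ 2 = ∑' i, f i ^ 2 + 2 * ∑' i, f i * g i + ∑' i, g i ^ 2 := by
  have hfg := (hf.mul_of_summable_sq hg).mul_left 2
  simp only [add_sq, mul_assoc]
  rw [(hf.add hfg).tsum_add hg, hf.tsum_add hfg, tsum_mul_left]

theorem summable_sq_finset_sum {κ : Type*} (s : Finset κ) {f : κ → ι → ℝ}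
    (hf : ∀ k ∈ s, Summable fun i => f k i ^ 2) : Summable fun i => (∑ k ∈ s, f k i) ^ 2 := by
  classical
  induction s using Finset.induction_on with
  | empty => simp
  | insert k s hk ih =>
    simp only [sum_insert hk]
    exact (hf k (mem_insert_self k s)).sq_add (ih fun k' hk' => hf k' (mem_insert_of_mem hk'))

theorem Summable.mul_sq_of_abs_le {w : ι → ℝ} {C : ℝ} (hw : ∀ i, |w i| ≤ C)
    (hu : Summable fun i => u i ^ 2) : Summable fun i => (w i * u i) ^ 2 := by
  refine .of_nonneg_of_le (fun i => sq_nonneg _) (fun i => ?_) (hu.mul_left (C ^ 2))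
  rw [mul_pow, ← sq_abs (w i)]
  gcongr
  exact hw i

theorem sq_mul_tsum_sq_le {w : ι → ℝ} {c : ℝ} (hc : 0 ≤ c) (hw : ∀ i, c ≤ |w i|)
    (hu : Summable fun i => u i ^ 2) (hwu : Summable fun i => (w i * u i) ^ 2) :
    c ^ 2 * ∑' i, u i ^ 2 ≤ ∑' i, (w i * u i) ^ 2 := by
  rw [← tsum_mul_left]
  refine (hu.mul_left _).tsum_le_tsum (fun i => ?_) hwu
  rw [mul_pow, ← sq_abs (w i)]
  gcongr
  exact hw i

end SquareSummable

section Shift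

variable {G : Type*} [AddGroup G] {u : G → ℝ}

theorem summable_comp_add_right_iff {α : Type*} [AddCommMonoid α] [TopologicalSpace α]
    {f : G → α} (c : G) : (Summable fun n => f (n + c)) ↔ Summable f :=
  (Equiv.addRight c).summable_iff

theorem tsum_comp_add_right {α : Type*} [AddCommMonoid α] [TopologicalSpace α] (f : G → α)
    (c : G) : ∑' n, f (n + c) = ∑' n, f n :=
  (Equiv.addRight c).tsum_eq f

theorem summable_sq_add_sub (hu : Summable fun n => u n ^ 2) (c : G) :
    Summable fun n => (u (n + c) + u (n - c)) ^ 2 := by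
  simp only [sub_eq_add_neg]
  exact ((summable_comp_add_right_iff c).2 hu).sq_add ((summable_comp_add_right_iff (-c)).2 hu)

/-- The reflection `n ↦ n + c` turns the backward half of the sum into minus the forward half. -/
theorem tsum_mul_add_sub_eq_zero_of_antiperiodic {ε : G → ℝ} {c : G}
    (hε : Antiperiodic ε c) (hε_le : ∀ n, |ε n| ≤ 1) (hu : Summable fun n => u n ^ 2) :
    ∑' n, (u (n + c) + u (n - c)) * (ε n * u n) = 0 := by
  have hεu := hu.mul_sq_of_abs_le hε_le
  have hfwd : Summable fun n => u (n + c) * (ε n * u n) :=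
    ((summable_comp_add_right_iff c).2 hu).mul_of_summable_sq hεu
  have hbwd : Summable fun n => u (n - c) * (ε n * u n) := by
    simpa only [sub_eq_add_neg] using
      ((summable_comp_add_right_iff (-c)).2 hu).mul_of_summable_sq hεu
  have hreflect : ∑' n, u (n - c) * (ε n * u n) = -∑' n, u (n + c) * (ε n * u n) := by
    rw [← tsum_comp_add_right _ c, ← tsum_neg]
    refine tsum_congr fun n => ?_
    rw [add_sub_cancel_right, hε n]
    ring
  simp only [add_mul]
  rw [hfwd.tsum_add hbwd, hreflect, add_neg_cancel]

theorem abs_tsum_mul_add_sub_le {w : G → ℝ} {C : ℝ} (hw : ∀ n, |w n| ≤ C)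
    (hu : Summable fun n => u n ^ 2) (c : G) :
    |∑' n, (u (n + c) + u (n - c)) * (w n * u n)| ≤ 2 * C * ∑' n, u n ^ 2 := by
  have hC : 0 ≤ C := (abs_nonneg _).trans (hw 0)
  have hfwd := (summable_comp_add_right_iff c).2 hu
  have hbwd := (summable_comp_add_right_iff (-c)).2 hu
  have hsum := (hu.add ((hfwd.add hbwd).div_const 2)).mul_left C
  have hvalue : ∑' n, C * (u n ^ 2 + (u (n + c) ^ 2 + u (n + -c) ^ 2) / 2)
      = 2 * C * ∑' n, u n ^ 2 := by
    rw [tsum_mul_left, hu.tsum_add ((hfwd.add hbwd).div_const 2), tsum_div_const,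
      hfwd.tsum_add hbwd, tsum_comp_add_right (u · ^ 2), tsum_comp_add_right (u · ^ 2)]
    ring
  rw [← Real.norm_eq_abs, ← hvalue]
  refine tsum_of_norm_bounded hsum.hasSum fun n => ?_
  rw [Real.norm_eq_abs, mul_comm (w n), ← mul_assoc, abs_mul, ← sub_eq_add_neg, mul_comm C]
  refine mul_le_mul (?_ : _ ≤ _) (hw n) (abs_nonneg _) (by positivity)
  calc |(u (n + c) + u (n - c)) * u n| ≤ |u (n + c) * u n| + |u (n - c) * u n| := by
        rw [add_mul]; exact abs_add_le _ _
    _ ≤ _ := by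
        linarith [abs_mul_le_add_sq_div_two (u (n + c)) (u n),
          abs_mul_le_add_sq_div_two (u (n - c)) (u n)]

end Shift

section Laplacian

variable {G ι : Type*} [AddGroup G] [Fintype ι] (e : ι → G) {u : G → ℝ}

def discreteLaplacian (u : G → ℝ) (n : G) : ℝ :=
  ∑ i, (u (n + e i) + u (n - e i))

theorem summable_sq_discreteLaplacian (hu : Summable fun n => u n ^ 2) :
    Summable fun n => discreteLaplacian e u n ^ 2 :=
  summable_sq_finset_sum _ fun i _ => summable_sq_add_sub hu (e i)

theorem tsum_discreteLaplacian_mul {w : G → ℝ} {C : ℝ} (hw : ∀ n, |w n| ≤ C)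
    (hu : Summable fun n => u n ^ 2) :
    ∑' n, discreteLaplacian e u n * (w n * u n)
      = ∑ i, ∑' n, (u (n + e i) + u (n - e i)) * (w n * u n) := by
  simp only [discreteLaplacian, sum_mul]
  exact Summable.tsum_finsetSum fun i _ =>
    (summable_sq_add_sub hu (e i)).mul_of_summable_sq (hu.mul_sq_of_abs_le hw)

theorem abs_tsum_discreteLaplacian_mul_le {ε V : G → ℝ} {a C : ℝ}
    (hε : ∀ i, Antiperiodic ε (e i)) (hε_le : ∀ n, |ε n| ≤ 1) (hV : ∀ n, |V n - a * ε n| ≤ C)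
    (hu : Summable fun n => u n ^ 2) :
    |∑' n, discreteLaplacian e u n * (V n * u n)|
      ≤ 2 * Fintype.card ι * C * ∑' n, u n ^ 2 := by
  have hLu := summable_sq_discreteLaplacian e hu
  have hsplit : ∀ n, discreteLaplacian e u n * (V n * u n)
      = a * (discreteLaplacian e u n * (ε n * u n))
        + discreteLaplacian e u n * ((V n - a * ε n) * u n) := fun n => by ring
  rw [tsum_congr hsplit,
    ((hLu.mul_of_summable_sq (hu.mul_sq_of_abs_le hε_le)).mul_left a).tsum_add
      (hLu.mul_of_summable_sq (hu.mul_sq_of_abs_le hV)), tsum_mul_left,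
    tsum_discreteLaplacian_mul e hε_le hu, tsum_discreteLaplacian_mul e hV hu]
  simp only [tsum_mul_add_sub_eq_zero_of_antiperiodic (hε _) hε_le hu, sum_const_zero,
    mul_zero, zero_add]
  calc |∑ i, ∑' n, (u (n + e i) + u (n - e i)) * ((V n - a * ε n) * u n)|
      ≤ ∑ i : ι, 2 * C * ∑' n, u n ^ 2 :=
        (abs_sum_le_sum_abs _ _).trans
          (sum_le_sum fun i _ => abs_tsum_mul_add_sub_le hV hu (e i))
    _ = 2 * Fintype.card ι * C * ∑' n, u n ^ 2 := by
        rw [sum_const, card_univ, nsmul_eq_mul]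
        ring

end Laplacian

section Lattice

variable {ι : Type*} [Fintype ι]

def altSign (n : ι → ℤ) : ℝ :=
  (-1) ^ ∑ i, (n i).natAbs

theorem neg_one_pow_natAbs_add_one (k : ℤ) :
    (-1 : ℝ) ^ (k + 1).natAbs = -(-1) ^ k.natAbs := by
  rcases Int.even_or_odd k with h | h
  · rw [(Int.natAbs_even.mpr h).neg_one_pow, (Int.natAbs_odd.mpr h.add_one).neg_one_pow]
  · rw [(Int.natAbs_odd.mpr h).neg_one_pow, (Int.natAbs_even.mpr h.add_one).neg_one_pow, neg_neg]

theorem altSign_antiperiodic [DecidableEq ι] (i : ι) :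
    Antiperiodic altSign (Pi.single i 1) := by
  intro n
  have hcompl :
      ∑ j ∈ {i}ᶜ, (n j + (Pi.single i 1 : ι → ℤ) j).natAbs = ∑ j ∈ {i}ᶜ, (n j).natAbs :=
    sum_congr rfl fun j hj => by rw [Pi.single_eq_of_ne (by simpa using hj), add_zero]
  simp only [altSign, Fintype.sum_eq_add_sum_compl i, Pi.add_apply, hcompl, pow_add,
    Pi.single_eq_same, neg_one_pow_natAbs_add_one, neg_mul]

theorem abs_altSign (n : ι → ℤ) : |altSign n| = 1 := by
  simp [altSign]

theorem altSign_eq_one_of_dvd {q n : ι → ℤ} (hq : ∀ i, Even (q i)) (hn : ∀ i, q i ∣ n i) :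
    altSign n = 1 :=
  Even.neg_one_pow <| even_sum _ fun i _ =>
    Int.natAbs_even.mpr (even_iff_two_dvd.mpr ((hq i).two_dvd.trans (hn i)))

end Lattice

section Potential

variable {d : ℕ} (q : Fin d → ℕ+) (δ : ℝ)

noncomputable def latticePotential (n : Fin d → ℤ) : ℝ :=
  if ∀ i, (q i : ℤ) ∣ n i then (1 - δ ^ 2 / d) * δ else δ * altSign n

variable {q δ}

theorem abs_latticePotential_sub_le (hq : ∀ i, Even (q i : ℕ)) (hδ : 0 ≤ δ) (n : Fin d → ℤ) :
    |latticePotential q δ n - δ * altSign n| ≤ δ ^ 3 / d := by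
  unfold latticePotential
  split_ifs with hn
  · have hdefect : (1 - δ ^ 2 / d) * δ - δ * 1 = -(δ ^ 3 / d) := by ring
    rw [altSign_eq_one_of_dvd (fun i => by exact_mod_cast hq i) hn, hdefect, abs_neg,
      abs_of_nonneg (by positivity)]
  · simp only [sub_self, abs_zero]
    positivity

theorem le_abs_latticePotential (hδ : 0 ≤ δ) (n : Fin d → ℤ) :
    (1 - δ ^ 2 / d) * δ ≤ |latticePotential q δ n| := by
  unfold latticePotential
  split_ifs
  · exact le_abs_self _
  · rw [abs_mul, abs_altSign, mul_one, abs_of_nonneg hδ]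
    nlinarith [div_nonneg (sq_nonneg δ) d.cast_nonneg]

theorem abs_latticePotential_le (hq : ∀ i, Even (q i : ℕ)) (hδ : 0 ≤ δ) (n : Fin d → ℤ) :
    |latticePotential q δ n| ≤ δ + δ ^ 3 / d := by
  have := abs_sub_abs_le_abs_sub (latticePotential q δ n) (δ * altSign n)
  rw [abs_mul, abs_altSign, mul_one, abs_of_nonneg hδ] at this
  linarith [abs_latticePotential_sub_le hq hδ n]

end Potential

theorem stmt13 (d : ℕ) (hd : 1 ≤ d) (q : Fin d → ℕ+) (hq : ∀ i, Even (q i : ℕ)) :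
    ∃ δ₀ > (0 : ℝ), ∀ δ : ℝ, 0 < δ → δ < δ₀ →
      ∀ V : (Fin d → ℤ) → ℝ,
        (∀ n : Fin d → ℤ, V n =
          if ∀ i, ((q i : ℤ)) ∣ n i then (1 - δ^2 / d) * δ
          else δ * (-1 : ℝ) ^ (∑ i, (n i).natAbs)) →
      ∀ u : (Fin d → ℤ) → ℝ, Summable (fun n => (u n)^2) → (∑' n, (u n)^2) = 1 →
        Real.sqrt (∑' n : Fin d → ℤ,
          ((∑ i, (u (n + (Pi.single i 1 : Fin d → ℤ)) + u (n - (Pi.single i 1 : Fin d → ℤ))))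
            + V n * u n)^2) > δ / 2 := by
  refine ⟨1 / 10, by norm_num, fun δ hδ hδ₀ V hV u hu hu1 => ?_⟩
  obtain rfl : V = latticePotential q δ := funext hV
  set e : Fin d → Fin d → ℤ := fun i => Pi.single i 1
  have hVu : Summable fun n => (latticePotential q δ n * u n) ^ 2 :=
    hu.mul_sq_of_abs_le (abs_latticePotential_le hq hδ.le)
  have hpos : 0 ≤ (1 - δ ^ 2) * δ := by nlinarith
  have hc : (1 - δ ^ 2) * δ ≤ (1 - δ ^ 2 / d) * δ := by
    gcongr
    exact div_le_self (sq_nonneg δ) (by exact_mod_cast hd)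
  have hpot : ((1 - δ ^ 2) * δ) ^ 2 ≤ ∑' n, (latticePotential q δ n * u n) ^ 2 := by
    simpa only [hu1, mul_one] using
      sq_mul_tsum_sq_le hpos (fun n => hc.trans (le_abs_latticePotential hδ.le n)) hu hVu
  have hcross :
      |∑' n, discreteLaplacian e u n * (latticePotential q δ n * u n)| ≤ 2 * δ ^ 3 := by
    have := abs_tsum_discreteLaplacian_mul_le e altSign_antiperiodic
      (fun n => (abs_altSign n).le) (abs_latticePotential_sub_le hq hδ.le) hu
    rwa [Fintype.card_fin, hu1, mul_one, mul_assoc, mul_div_cancel₀ _ (by positivity)] at this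
  have hexpand := tsum_sq_add (summable_sq_discreteLaplacian e hu) hVu
  have hLu : 0 ≤ ∑' n, discreteLaplacian e u n ^ 2 := tsum_nonneg fun n => sq_nonneg _
  have hsmall : (δ / 2) ^ 2 < ((1 - δ ^ 2) * δ) ^ 2 - 4 * δ ^ 3 := by
    nlinarith [pow_pos hδ 3, pow_pos hδ 4, pow_pos hδ 5]
  rw [gt_iff_lt, Real.lt_sqrt (by positivity)]
  change (δ / 2) ^ 2 < ∑' n, (discreteLaplacian e u n + latticePotential q δ n * u n) ^ 2
  linarith [abs_le.mp hcross]
end
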